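/- arXiv:1806.00079 — 4 statements merged into one kernel-verified Lean document; each statement's English description precedes it below -/
import Mathlib

section
/- Let (w_i, x̂_i), i = 1,…,n, be an edge cloud (weights w_i > 0, unit vectors x̂_i ∈ S^{d−1}), and suppose μ ∈ ℝ^d is a geometric median of the edge cloud which is not equal to any x̂_i. Then the polygon gmc(x) with edge vectors w_i (x̂_i − μ)/‖x̂_i − μ‖ is closed, i.e. ∑_i w_i (x̂_i − μ)/‖x̂_i − μ‖ = 0, and has the same edgelengths w_i. Moreover gmc(x) does not depend on the choice of such a geometric median μ. -/
/-!
Away from the points `x̂ᵢ` the weighted distance sum is differentiable with gradient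
`-∑ ωᵢ (x̂ᵢ - y)/‖x̂ᵢ - y‖`, which vanishes at a minimizer: this is the closing condition.
If `μ` and `μ'` both minimize, convexity forces equality at their midpoint in every
triangle inequality `‖(x̂ᵢ - μ) + (x̂ᵢ - μ')‖ ≤ ‖x̂ᵢ - μ‖ + ‖x̂ᵢ - μ'‖`; by strict convexity
of the norm `x̂ᵢ - μ` and `x̂ᵢ - μ'` then lie on a common ray, so the edge directions agree.
-/

open Finset

variable {E : Type*} {ι : Type*} [Fintype ι]

noncomputable def weightedDistSum [NormedAddCommGroup E] (c : ι → ℝ) (x : ι → E) (y : E) : ℝ :=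
  ∑ i, c i * ‖x i - y‖

section InnerProductSpace

variable [NormedAddCommGroup E] [InnerProductSpace ℝ E]

theorem hasFDerivAt_norm_sub_right {a y : E} (h : y ≠ a) :
    HasFDerivAt (fun z => ‖a - z‖) (innerSL ℝ (‖a - y‖⁻¹ • (y - a))) y := by
  have hpos : 0 < ‖a - y‖ := norm_pos_iff.2 (sub_ne_zero.2 h.symm)
  have hsq := ((hasFDerivAt_id y).const_sub a).norm_sq.sqrt (pow_ne_zero 2 hpos.ne')
  simp only [Real.sqrt_sq (norm_nonneg _)] at hsq
  refine hsq.congr_fderiv ?_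
  ext v
  simp only [id_eq, one_div, mul_inv_rev, map_sub, ContinuousLinearMap.comp_neg,
    ContinuousLinearMap.comp_id, neg_sub, smul_apply, sub_apply, coe_innerSL_apply, nsmul_eq_mul,
    Nat.cast_ofNat, smul_eq_mul, map_smul]
  ring

theorem sum_div_norm_smul_eq_zero_of_isLocalMin {c : ι → ℝ} {x : ι → E} {μ : E}
    (hmin : IsLocalMin (weightedDistSum c x) μ) (hμ : ∀ i, μ ≠ x i) :
    ∑ i, (c i / ‖x i - μ‖) • (x i - μ) = 0 := by
  set s := ∑ i, (c i / ‖x i - μ‖) • (x i - μ)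
  have hderiv : HasFDerivAt (weightedDistSum c x) (innerSL ℝ (-s)) μ := by
    refine (HasFDerivAt.fun_sum (u := univ) fun i _ =>
      (hasFDerivAt_norm_sub_right (hμ i)).const_mul (c i)).congr_fderiv ?_
    ext v
    simp only [map_smul, map_sub, _root_.sum_apply, smul_apply, sub_apply, coe_innerSL_apply,
      smul_eq_mul, map_neg, map_sum, neg_apply, s]
    rw [← sum_neg_distrib]
    exact sum_congr rfl fun i _ => by ring
  have hs : innerSL ℝ (-s) = 0 := hmin.hasFDerivAt_eq_zero hderiv
  simpa using congr($hs (-s))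

end InnerProductSpace

section NormedSpace

variable [NormedAddCommGroup E] [NormedSpace ℝ E]

theorem norm_sub_midpoint (a y z : E) :
    ‖a - midpoint ℝ y z‖ = ‖(a - y) + (a - z)‖ / 2 := by
  have h : a - midpoint ℝ y z = (2 : ℝ)⁻¹ • ((a - y) + (a - z)) := by
    rw [midpoint_eq_smul_add, invOf_eq_inv]
    module
  rw [h, norm_smul]
  norm_num
  ring

theorem sameRay_sub_of_isMinOn [StrictConvexSpace ℝ E] {c : ι → ℝ} (hc : ∀ i, 0 < c i)
    {x : ι → E} {μ μ' : E} (hμ : IsMinOn (weightedDistSum c x) Set.univ μ)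
    (hμ' : IsMinOn (weightedDistSum c x) Set.univ μ') (i : ι) :
    SameRay ℝ (x i - μ) (x i - μ') := by
  have hle : ∀ j ∈ univ, c j * (‖(x j - μ) + (x j - μ')‖ / 2)
      ≤ c j * ((‖x j - μ‖ + ‖x j - μ'‖) / 2) := fun j _ => by
    gcongr
    · exact (hc j).le
    · exact norm_add_le _ _
  have hsum : ∑ j, c j * (‖(x j - μ) + (x j - μ')‖ / 2)
      = ∑ j, c j * ((‖x j - μ‖ + ‖x j - μ'‖) / 2) := by
    refine le_antisymm (sum_le_sum hle) ?_
    have hval : weightedDistSum c x μ = weightedDistSum c x μ' :=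
      le_antisymm (hμ (Set.mem_univ μ')) (hμ' (Set.mem_univ μ))
    calc ∑ j, c j * ((‖x j - μ‖ + ‖x j - μ'‖) / 2)
        = (weightedDistSum c x μ + weightedDistSum c x μ') / 2 := by
          simp only [weightedDistSum, ← sum_add_distrib, sum_div]
          exact sum_congr rfl fun j _ => by ring
      _ = weightedDistSum c x μ := by rw [hval]; ring
      _ ≤ weightedDistSum c x (midpoint ℝ μ μ') := hμ (Set.mem_univ _)
      _ = _ := by simp only [weightedDistSum, norm_sub_midpoint]
  have hi := (sum_eq_sum_iff_of_le hle).1 hsum i (mem_univ i)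
  rw [mul_right_inj' (hc i).ne'] at hi
  exact sameRay_iff_norm_add.2 (by linarith)

end NormedSpace

theorem stmt2_general (d n : ℕ) (w : Fin n → ℝ) (hw : ∀ i, 0 < w i)
    (x : Fin n → EuclideanSpace ℝ (Fin d))
    (μ : EuclideanSpace ℝ (Fin d))
    (hmed : IsMinOn (fun y : EuclideanSpace ℝ (Fin d) =>
      ∑ i, (w i / ∑ j, w j) * ‖x i - y‖) Set.univ μ)
    (hμ : ∀ i, μ ≠ x i) :
    (∑ i, (w i / ‖x i - μ‖) • (x i - μ) = 0) ∧
    (∀ i, ‖(w i / ‖x i - μ‖) • (x i - μ)‖ = w i) ∧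
    (∀ μ' : EuclideanSpace ℝ (Fin d),
      IsMinOn (fun y : EuclideanSpace ℝ (Fin d) =>
        ∑ i, (w i / ∑ j, w j) * ‖x i - y‖) Set.univ μ' →
      (∀ i, μ' ≠ x i) →
      ∀ i, (w i / ‖x i - μ‖) • (x i - μ) = (w i / ‖x i - μ'‖) • (x i - μ')) := by
  set W := ∑ j, w j
  -- stated per index, since `W = 0` when `n = 0`
  have hW : ∀ i, 0 < W := fun i => sum_pos (fun j _ => hw j) ⟨i, mem_univ i⟩
  have hdist : ∀ i, 0 < ‖x i - μ‖ := fun i => norm_pos_iff.2 (sub_ne_zero.2 (hμ i).symm)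
  refine ⟨?_, fun i => ?_, fun μ' hmed' hμ' i => ?_⟩
  · have hcrit := sum_div_norm_smul_eq_zero_of_isLocalMin
      (hmed.isLocalMin Filter.univ_mem) hμ
    calc ∑ i, (w i / ‖x i - μ‖) • (x i - μ)
        = W • ∑ i, (w i / W / ‖x i - μ‖) • (x i - μ) := by
          rw [smul_sum]
          refine sum_congr rfl fun i _ => ?_
          rw [smul_smul, mul_div_assoc', mul_div_cancel₀ _ (hW i).ne']
      _ = 0 := by rw [hcrit, smul_zero]
  · rw [norm_smul, Real.norm_eq_abs, abs_of_pos (div_pos (hw i) (hdist i)),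
      div_mul_cancel₀ _ (hdist i).ne']
  · have hray := sameRay_sub_of_isMinOn (fun j => div_pos (hw j) (hW j)) hmed hmed' i
    simp only [div_eq_mul_inv, mul_smul]
    rw [hray.inv_norm_smul_eq (sub_ne_zero.2 (hμ i).symm) (sub_ne_zero.2 (hμ' i).symm)]

/-- If `μ` is a geometric median of the edge cloud `(w_i, x̂_i)` (a minimizer of
`y ↦ ∑ ω_i ‖x̂_i - y‖` with `ω_i = w_i/∑ w_j`) which is not one of the `x̂_i`, then the
geometric median closure, with edge vectors `w_i (x̂_i - μ)/‖x̂_i - μ‖`, is closed, has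
edgelengths `w_i`, and does not depend on the choice of such a geometric median. -/
theorem stmt2 (d n : ℕ) (w : Fin n → ℝ) (hw : ∀ i, 0 < w i)
    (x : Fin n → EuclideanSpace ℝ (Fin d)) (hx : ∀ i, ‖x i‖ = 1)
    (μ : EuclideanSpace ℝ (Fin d))
    (hmed : IsMinOn (fun y : EuclideanSpace ℝ (Fin d) =>
      ∑ i, (w i / ∑ j, w j) * ‖x i - y‖) Set.univ μ)
    (hμ : ∀ i, μ ≠ x i) :
    (∑ i, (w i / ‖x i - μ‖) • (x i - μ) = 0) ∧
    (∀ i, ‖(w i / ‖x i - μ‖) • (x i - μ)‖ = w i) ∧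
    (∀ μ' : EuclideanSpace ℝ (Fin d),
      IsMinOn (fun y : EuclideanSpace ℝ (Fin d) =>
        ∑ i, (w i / ∑ j, w j) * ‖x i - y‖) Set.univ μ' →
      (∀ i, μ' ≠ x i) →
      ∀ i, (w i / ‖x i - μ‖) • (x i - μ) = (w i / ‖x i - μ'‖) • (x i - μ')) :=
  stmt2_general d n w hw x μ hmed hμ
end

section
/- Let x ∈ Arm(n,d,1) be an equilateral open polygon (all w_i = 1) whose edge cloud has a geometric median μ not equal to any edge direction x̂_i (i.e. x is median-closeable). Then the geometric median closure gmc(x), with edge vectors (x̂_i − μ)/‖x̂_i − μ‖, is a closed equilateral polygon, and for every closed equilateral polygon y ∈ Pol(n,d,1) one has d_chordal(x, gmc(x)) ≤ d_chordal(x, y); i.e. gmc(x) is the closed equilateral polygon closest to x in the chordal metric. -/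
open RealInnerProductSpace

section aux

variable {E : Type*} [NormedAddCommGroup E] [InnerProductSpace ℝ E]

private lemma gmc_norm_fderiv (x0 μ : E) (h : x0 - μ ≠ 0) :
    HasFDerivAt (fun y : E => ‖x0 - y‖) (-(‖x0 - μ‖⁻¹ • innerSL ℝ (x0 - μ))) μ := by
  have h1 : HasFDerivAt (fun y : E => ‖x0 - y‖ ^ 2)
      (2 • (innerSL ℝ (x0 - μ)).comp (-(ContinuousLinearMap.id ℝ E))) μ := by
    simpa using ((hasFDerivAt_id μ).const_sub x0).norm_sq
  have h2 := h1.sqrt (pow_ne_zero 2 (norm_ne_zero_iff.mpr h))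
  have he : (fun y : E => Real.sqrt (‖x0 - y‖ ^ 2)) = fun y : E => ‖x0 - y‖ := by
    funext y; rw [Real.sqrt_sq (norm_nonneg _)]
  rw [he] at h2
  convert h2 using 1
  ext v
  have hn : ‖x0 - μ‖ ≠ 0 := norm_ne_zero_iff.mpr h
  simp [Real.sqrt_sq (norm_nonneg _)]
  field_simp
  ring

private lemma gmc_sum_zero (n : ℕ) (hn : (n : ℝ) ≠ 0) (x : Fin n → E) (μ : E)
    (hmed : IsMinOn (fun y : E => (1 / (n : ℝ)) * ∑ i, ‖x i - y‖) Set.univ μ)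
    (hμ : ∀ i, μ ≠ x i) :
    ∑ i, (1 / ‖x i - μ‖) • (x i - μ) = 0 := by
  have hne : ∀ i, x i - μ ≠ 0 := fun i => sub_ne_zero.mpr (Ne.symm (hμ i))
  have hD : HasFDerivAt (fun y : E => (1 / (n : ℝ)) * ∑ i, ‖x i - y‖)
      ((1 / (n : ℝ)) • ∑ i, -(‖x i - μ‖⁻¹ • innerSL ℝ (x i - μ))) μ := by
    have := HasFDerivAt.sum (fun i (_ : i ∈ Finset.univ) => gmc_norm_fderiv (x i) μ (hne i))
    simpa using this.const_mul (1 / (n : ℝ))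
  have hloc : IsLocalMin (fun y : E => (1 / (n : ℝ)) * ∑ i, ‖x i - y‖) μ :=
    hmed.isLocalMin (by simp)
  have h0 := hloc.hasFDerivAt_eq_zero hD
  set s : E := ∑ i, (1 / ‖x i - μ‖) • (x i - μ) with hs
  have h1 : ((1 / (n : ℝ)) • ∑ i, -(‖x i - μ‖⁻¹ • innerSL ℝ (x i - μ))) s = 0 := by
    rw [h0]; rfl
  have h2 : ⟪s, s⟫ = 0 := by
    simp only [ContinuousLinearMap.smul_apply, ContinuousLinearMap.sum_apply,
      ContinuousLinearMap.neg_apply, ContinuousLinearMap.smul_apply, innerSL_apply_apply,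
      smul_eq_mul] at h1
    have : ∑ i, ‖x i - μ‖⁻¹ * ⟪x i - μ, s⟫ = 0 := by
      have := mul_eq_zero.mp h1
      rcases this with h | h
      · exact absurd h (by simpa using hn)
      · have := neg_eq_zero.mp (by simpa [Finset.sum_neg_distrib] using h)
        simpa using this
    calc ⟪s, s⟫ = ∑ i, ⟪(1 / ‖x i - μ‖) • (x i - μ), s⟫ := by rw [hs, sum_inner]
    _ = ∑ i, ‖x i - μ‖⁻¹ * ⟪x i - μ, s⟫ := by
        simp [real_inner_smul_left, one_div]
    _ = 0 := this
  exact inner_self_eq_zero.mp h2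

end aux

/-- If `x ∈ Arm(n,d,1)` is median-closeable, with geometric median `μ` of its edge cloud
(a minimizer of `y ↦ (1/n) ∑ ‖x̂_i - y‖`) not equal to any `x̂_i`, then the geometric median
closure `gmc(x)`, with edges `(x̂_i - μ)/‖x̂_i - μ‖`, is a closed equilateral polygon, and it
is at least as close to `x` in the chordal metric as any closed equilateral polygon `y`. -/
theorem stmt4 (d n : ℕ) (x : Fin n → EuclideanSpace ℝ (Fin d)) (hx : ∀ i, ‖x i‖ = 1)
    (μ : EuclideanSpace ℝ (Fin d))
    (hmed : IsMinOn (fun y : EuclideanSpace ℝ (Fin d) =>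
      (1 / (n : ℝ)) * ∑ i, ‖x i - y‖) Set.univ μ)
    (hμ : ∀ i, μ ≠ x i) :
    (∀ i, ‖(1 / ‖x i - μ‖) • (x i - μ)‖ = 1) ∧
    (∑ i, (1 / ‖x i - μ‖) • (x i - μ) = 0) ∧
    (∀ y : Fin n → EuclideanSpace ℝ (Fin d), (∀ i, ‖y i‖ = 1) → ∑ i, y i = 0 →
      Real.sqrt (∑ i, ‖x i - (1 / ‖x i - μ‖) • (x i - μ)‖ ^ 2) ≤
        Real.sqrt (∑ i, ‖x i - y i‖ ^ 2)) := by
  have hne : ∀ i, x i - μ ≠ 0 := fun i => sub_ne_zero.mpr (Ne.symm (hμ i))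
  have hnm : ∀ i, ‖x i - μ‖ ≠ 0 := fun i => norm_ne_zero_iff.mpr (hne i)
  set g : Fin n → EuclideanSpace ℝ (Fin d) := fun i => (1 / ‖x i - μ‖) • (x i - μ) with hg
  have hunit : ∀ i, ‖g i‖ = 1 := by
    intro i
    rw [hg]
    rw [norm_smul]
    simp [abs_of_nonneg (by positivity : (0:ℝ) ≤ 1 / ‖x i - μ‖), hnm i]
  have hsum : ∑ i, g i = 0 := by
    rcases Nat.eq_zero_or_pos n with h | h
    · subst h; simp
    · exact gmc_sum_zero n (Nat.cast_ne_zero.mpr h.ne') x μ hmed hμ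
  refine ⟨hunit, hsum, ?_⟩
  intro y hy hysum
  apply Real.sqrt_le_sqrt
  -- expand squares
  have expand : ∀ (z : Fin n → EuclideanSpace ℝ (Fin d)), (∀ i, ‖z i‖ = 1) →
      ∑ i, ‖x i - z i‖ ^ 2 = 2 * n - 2 * ∑ i, ⟪x i, z i⟫ := by
    intro z hz
    have : ∀ i, ‖x i - z i‖ ^ 2 = 2 - 2 * ⟪x i, z i⟫ := by
      intro i
      rw [norm_sub_sq_real, hx i, hz i]
      ring
    rw [Finset.sum_congr rfl fun i _ => this i]
    simp [Finset.sum_sub_distrib, Finset.mul_sum]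
    ring
  rw [expand g hunit, expand y hy]
  have key : ∑ i, ⟪x i, y i⟫ ≤ ∑ i, ⟪x i, g i⟫ := by
    have hgval : ∀ i, ⟪x i, g i⟫ = ‖x i - μ‖ + ⟪μ, g i⟫ := by
      intro i
      have : ⟪x i, g i⟫ = ⟪x i - μ, g i⟫ + ⟪μ, g i⟫ := by
        rw [← inner_add_left]; congr 1; abel
      rw [this, hg]
      have : ⟪x i - μ, (1 / ‖x i - μ‖) • (x i - μ)⟫ = ‖x i - μ‖ := by
        rw [real_inner_smul_right, real_inner_self_eq_norm_sq]
        field_simp [hnm i]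
      rw [this]
    have hgsum : ∑ i, ⟪x i, g i⟫ = ∑ i, ‖x i - μ‖ := by
      rw [Finset.sum_congr rfl fun i _ => hgval i, Finset.sum_add_distrib,
        ← inner_sum, hsum, inner_zero_right, add_zero]
    have hyle : ∑ i, ⟪x i, y i⟫ ≤ ∑ i, ‖x i - μ‖ := by
      have : ∀ i, ⟪x i, y i⟫ = ⟪x i - μ, y i⟫ + ⟪μ, y i⟫ := by
        intro i; rw [← inner_add_left]; congr 1; abel
      rw [Finset.sum_congr rfl fun i _ => this i, Finset.sum_add_distrib,
        ← inner_sum, hysum, inner_zero_right, add_zero]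
      apply Finset.sum_le_sum
      intro i _
      calc ⟪x i - μ, y i⟫ ≤ ‖x i - μ‖ * ‖y i‖ := real_inner_le_norm _ _
      _ = ‖x i - μ‖ := by rw [hy i, mul_one]
    linarith [hgsum, hyle]
  linarith [key]
end

section
/- Fix unit vectors x̂_1,…,x̂_n ∈ S^{d−1} and weights ω_i > 0 with ∑_i ω_i = 1, and let H Ad(y) denote the Hessian at y of Ad(y) = ∑_i ω_i ‖x̂_i − y‖. Then for every nonzero s ∈ ℝ^d with ‖s‖ < 1 (and s not equal to any x̂_i), ⟨H Ad(s)·s, s⟩/⟨s,s⟩ − ⟨H Ad(0)·s, s⟩/⟨s,s⟩ ≥ −‖s‖ (6 + ‖s‖ + ‖s‖²)/(1 − ‖s‖)³. In particular, if ‖s‖ < 1/50, the right-hand side is at least −7‖s‖. -/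
/-! Each summand of `Ad` is `y ↦ ‖x̂ - y‖` for a unit vector `x̂`, so it suffices to compare the
Hessian quadratic form of a single such distance at `s` and at `0`. At `0` it equals
`‖s‖² - ⟪x̂, s⟫²`; at `s` the distance `‖x̂ - s‖` lies in `[1 - ‖s‖, 1 + ‖s‖]` and
`|⟪x̂, s⟫| ≤ ‖s‖`, which reduces the comparison to an inequality between real numbers. Averaging
with the weights `ω_i` and dividing by `‖s‖²` gives the claim. -/

open RealInnerProductSpace

lemma hessian_variation_scalar_bound {r a q : ℝ} (hr0 : 0 ≤ r) (hr1 : r < 1)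
    (ha1 : 1 - r ≤ a) (ha2 : a ≤ 1 + r) (hq : |q| ≤ r) :
    -(r ^ 3 * (6 + r + r ^ 2) / (1 - r) ^ 3) ≤
      (r ^ 2 / a - (r ^ 2 - q) ^ 2 / a ^ 3) - (r ^ 2 - q ^ 2) := by
  have h1r : 0 < 1 - r := by linarith
  have h13 : 0 < (1 - r) ^ 3 := by positivity
  obtain ⟨hqL, hqU⟩ := abs_le.mp hq
  have hq2 : q ^ 2 ≤ r ^ 2 := sq_le_sq' hqL hqU
  have hA : r ^ 2 - r ^ 3 ≤ r ^ 2 / a :=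
    calc r ^ 2 - r ^ 3 ≤ r ^ 2 / (1 + r) := by
          rw [le_div_iff₀ (by linarith)]; nlinarith
      _ ≤ r ^ 2 / a := by gcongr; linarith
  have hB : -(r ^ 3 * (5 - 2 * r + r ^ 2)) / (1 - r) ^ 3 ≤ q ^ 2 - (r ^ 2 - q) ^ 2 / a ^ 3 :=
    calc -(r ^ 3 * (5 - 2 * r + r ^ 2)) / (1 - r) ^ 3
        ≤ (q ^ 2 * (1 - r) ^ 3 - (r ^ 2 - q) ^ 2) / (1 - r) ^ 3 := by
          gcongr
          nlinarith [mul_nonneg (mul_nonneg hr0 (sub_nonneg.2 hq2))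
              (show (0 : ℝ) ≤ 3 - 3 * r + r ^ 2 by nlinarith),
            mul_nonneg (sq_nonneg r) (show (0 : ℝ) ≤ q + r by linarith)]
      _ = q ^ 2 - (r ^ 2 - q) ^ 2 / (1 - r) ^ 3 := by field_simp
      _ ≤ q ^ 2 - (r ^ 2 - q) ^ 2 / a ^ 3 := by gcongr
  have hC : r ^ 3 ≤ r ^ 3 * (1 + 3 * r) / (1 - r) ^ 3 := by
    rw [le_div_iff₀ h13]
    nlinarith [mul_nonneg (pow_nonneg hr0 4) (show (0 : ℝ) ≤ 6 - 3 * r + r ^ 2 by nlinarith)]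
  have hsplit : r ^ 3 * (6 + r + r ^ 2) / (1 - r) ^ 3
      = r ^ 3 * (5 - 2 * r + r ^ 2) / (1 - r) ^ 3 + r ^ 3 * (1 + 3 * r) / (1 - r) ^ 3 := by
    field_simp; ring
  rw [hsplit, neg_add, ← neg_div]
  linarith

lemma cubic_bound_le_of_lt_one_div_fifty {r : ℝ} (hr0 : 0 ≤ r) (hr : r < 1 / 50) :
    r * (6 + r + r ^ 2) / (1 - r) ^ 3 ≤ 7 * r := by
  have h1r : 0 < 1 - r := by linarith
  rw [div_le_iff₀ (by positivity)]
  nlinarith [sq_nonneg r, pow_nonneg hr0 3, pow_nonneg hr0 4]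

section DistHessian

variable {E : Type*} [NormedAddCommGroup E] [InnerProductSpace ℝ E]

/-- The quadratic form `⟨H(y) s, s⟩` of the Hessian `H(y)` of `y ↦ ‖p - y‖`. -/
noncomputable def distHessianQuad (p y s : E) : ℝ :=
  ‖s‖ ^ 2 / ‖p - y‖ - ⟪y - p, s⟫ ^ 2 / ‖p - y‖ ^ 3

lemma distHessianQuad_zero {p : E} (hp : ‖p‖ = 1) (s : E) :
    distHessianQuad p 0 s = ‖s‖ ^ 2 - ⟪p, s⟫ ^ 2 := by
  simp [distHessianQuad, hp, inner_neg_left]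

lemma distHessianQuad_self (p s : E) :
    distHessianQuad p s s = ‖s‖ ^ 2 / ‖p - s‖ - (‖s‖ ^ 2 - ⟪p, s⟫) ^ 2 / ‖p - s‖ ^ 3 := by
  rw [distHessianQuad, inner_sub_left, real_inner_self_eq_norm_sq]

lemma distHessianQuad_self_sub_zero_ge {p s : E} (hp : ‖p‖ = 1) (hs : ‖s‖ < 1) :
    -(‖s‖ ^ 3 * (6 + ‖s‖ + ‖s‖ ^ 2) / (1 - ‖s‖) ^ 3) ≤
      distHessianQuad p s s - distHessianQuad p 0 s := by
  rw [distHessianQuad_self, distHessianQuad_zero hp]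
  refine hessian_variation_scalar_bound (norm_nonneg s) hs ?_ ?_ ?_
  · simpa [hp] using norm_sub_norm_le p s
  · simpa [hp] using norm_sub_le p s
  · simpa [hp] using abs_real_inner_le_norm p s

end DistHessian

theorem stmt13_general (d n : ℕ) (x : Fin n → EuclideanSpace ℝ (Fin d)) (hx : ∀ i, ‖x i‖ = 1)
    (ω : Fin n → ℝ) (hω : ∀ i, 0 < ω i) (hsum : ∑ i, ω i = 1)
    (Q : EuclideanSpace ℝ (Fin d) → EuclideanSpace ℝ (Fin d) → ℝ)
    (hQ : ∀ y s, Q y s = (∑ i, ω i / ‖x i - y‖) * ‖s‖ ^ 2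
      - ∑ i, (ω i / ‖x i - y‖ ^ 3) * (inner ℝ (y - x i) s : ℝ) ^ 2)
    (s : EuclideanSpace ℝ (Fin d)) (hs0 : s ≠ 0) (hs1 : ‖s‖ < 1) :
    Q s s / ‖s‖ ^ 2 - Q 0 s / ‖s‖ ^ 2 ≥
      -‖s‖ * (6 + ‖s‖ + ‖s‖ ^ 2) / (1 - ‖s‖) ^ 3 ∧
    (‖s‖ < 1 / 50 → -‖s‖ * (6 + ‖s‖ + ‖s‖ ^ 2) / (1 - ‖s‖) ^ 3 ≥ -7 * ‖s‖) := by
  have hQ_sum : ∀ y, Q y s = ∑ i, ω i * distHessianQuad (x i) y s := fun y => by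
    simp only [hQ, distHessianQuad, Finset.sum_mul, ← Finset.sum_sub_distrib]
    exact Finset.sum_congr rfl fun i _ => by ring
  set c := ‖s‖ ^ 3 * (6 + ‖s‖ + ‖s‖ ^ 2) / (1 - ‖s‖) ^ 3
  have hdiff : -c ≤ Q s s - Q 0 s :=
    calc -c = ∑ i, ω i * -c := by rw [← Finset.sum_mul, hsum, one_mul]
      _ ≤ ∑ i, ω i * (distHessianQuad (x i) s s - distHessianQuad (x i) 0 s) :=
          Finset.sum_le_sum fun i _ => mul_le_mul_of_nonneg_left
            (distHessianQuad_self_sub_zero_ge (hx i) hs1) (hω i).le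
      _ = Q s s - Q 0 s := by
          simp only [hQ_sum, mul_sub, Finset.sum_sub_distrib]
  have hr2 : 0 < ‖s‖ ^ 2 := by positivity
  refine ⟨?_, fun h50 => ?_⟩
  · rw [ge_iff_le, ← sub_div, le_div_iff₀ hr2]
    calc -‖s‖ * (6 + ‖s‖ + ‖s‖ ^ 2) / (1 - ‖s‖) ^ 3 * ‖s‖ ^ 2 = -c := by ring
      _ ≤ Q s s - Q 0 s := hdiff
  · have := cubic_bound_le_of_lt_one_div_fifty (norm_nonneg s) h50
    rw [neg_mul, neg_div]
    linarith

/-- Let `Q y s = ⟨H Ad(y) s, s⟩` denote the quadratic form of the Hessian of the weighted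
average distance function `Ad(y) = ∑ ω_i ‖x̂_i - y‖`, i.e.
`Q y s = (∑ ω_i/‖x̂_i - y‖)‖s‖² - ∑ (ω_i/‖x̂_i - y‖³)⟨y - x̂_i, s⟩²`. Then for `0 < ‖s‖ < 1`
(with `s` distinct from every `x̂_i`),
`Q s s/‖s‖² - Q 0 s/‖s‖² ≥ -‖s‖(6 + ‖s‖ + ‖s‖²)/(1-‖s‖)³`, and for `‖s‖ < 1/50` the
right-hand side is at least `-7‖s‖`. -/
theorem stmt13 (d n : ℕ) (x : Fin n → EuclideanSpace ℝ (Fin d)) (hx : ∀ i, ‖x i‖ = 1)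
    (ω : Fin n → ℝ) (hω : ∀ i, 0 < ω i) (hsum : ∑ i, ω i = 1)
    (Q : EuclideanSpace ℝ (Fin d) → EuclideanSpace ℝ (Fin d) → ℝ)
    (hQ : ∀ y s, Q y s = (∑ i, ω i / ‖x i - y‖) * ‖s‖ ^ 2
      - ∑ i, (ω i / ‖x i - y‖ ^ 3) * (inner ℝ (y - x i) s : ℝ) ^ 2)
    (s : EuclideanSpace ℝ (Fin d)) (hs0 : s ≠ 0) (hs1 : ‖s‖ < 1) (hsx : ∀ i, s ≠ x i) :
    Q s s / ‖s‖ ^ 2 - Q 0 s / ‖s‖ ^ 2 ≥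
      -‖s‖ * (6 + ‖s‖ + ‖s‖ ^ 2) / (1 - ‖s‖) ^ 3 ∧
    (‖s‖ < 1 / 50 → -‖s‖ * (6 + ‖s‖ + ‖s‖ ^ 2) / (1 - ‖s‖) ^ 3 ≥ -7 * ‖s‖) :=
  stmt13_general d n x hx ω hω hsum Q hQ s hs0 hs1
end

section
/- Fix d ≥ 2, unit vectors x̂_1,…,x̂_n ∈ S^{d−1}, and weights ω_i > 0 with ∑_i ω_i = 1, and let Ad(y) = ∑_i ω_i ‖x̂_i − y‖. Suppose ‖∑_i ω_i x̂_i‖ < 5/1000 and the smallest eigenvalue of the Hessian H Ad(0) = I_d − ∑_i ω_i x̂_i x̂_i^T is greater than (d−1)/d − 1/100. Then the geometric median μ of the weighted point cloud (the unique minimizer of Ad) satisfies ‖μ‖ ≤ 1/50. -/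
/-!
Write `r = ‖μ‖`, `C = ⟪∑ ωᵢ x̂ᵢ, μ⟫ ≤ r / 200` and `D = r² - ∑ ωᵢ ⟪x̂ᵢ, μ⟫² ≥ 49 r² / 100`
(the Hessian bound, as `(d - 1) / d ≥ 1 / 2`). For a unit vector `u`, the excess
`‖u - μ‖ - (1 - ⟪u, μ⟫)` of the distance over its linearisation at `0` is at least
`(r² - ⟪u, μ⟫²) / (2 (1 + r))`, and the midpoint-convexity gap of `y ↦ ‖u - y‖` on `[0, μ]` is at
least that excess divided by `2 (2 + r)`. Averaging, the mean excess `Δ = Ad(μ) - 1 + C` satisfies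
`D ≤ 2 (1 + r) Δ`, while `Ad(μ) ≤ Ad(μ / 2)` gives `Δ ≤ (2 + r) (C - Δ)`. Together,
`49 r (3 + r) ≤ (1 + r) (2 + r)`, which forces `r ≤ 1 / 50`.
-/

open scoped RealInnerProductSpace

section UnitVector

variable {E : Type*} [NormedAddCommGroup E] [InnerProductSpace ℝ E] {u : E}

lemma one_sub_inner_le_norm_sub (hu : ‖u‖ = 1) (m : E) : 1 - ⟪u, m⟫ ≤ ‖u - m‖ := by
  simpa [inner_sub_right, real_inner_self_eq_norm_sq, hu] using real_inner_le_norm u (u - m)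

lemma sq_norm_sub_sq_inner_le (hu : ‖u‖ = 1) (m : E) :
    ‖m‖ ^ 2 - ⟪u, m⟫ ^ 2 ≤ 2 * (1 + ‖m‖) * (‖u - m‖ - (1 - ⟪u, m⟫)) := by
  have hsq : ‖u - m‖ ^ 2 = (1 - ⟪u, m⟫) ^ 2 + (‖m‖ ^ 2 - ⟪u, m⟫ ^ 2) := by
    rw [norm_sub_sq_real, hu]; ring
  have hc : |⟪u, m⟫| ≤ ‖m‖ := by simpa [hu] using abs_real_inner_le_norm u m
  have hs : ‖u - m‖ ≤ 1 + ‖m‖ := by simpa [hu] using norm_sub_le u m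
  have hge := one_sub_inner_le_norm_sub hu m
  nlinarith [abs_le.mp hc]

lemma norm_sub_sub_one_sub_inner_le (hu : ‖u‖ = 1) (m : E) :
    ‖u - m‖ - (1 - ⟪u, m⟫) ≤ (2 + ‖m‖) * (1 + ‖u - m‖ - 2 * ‖u - (2⁻¹ : ℝ) • m‖) := by
  have hs : ‖u - m‖ ^ 2 = 1 - 2 * ⟪u, m⟫ + ‖m‖ ^ 2 := by
    rw [norm_sub_sq_real, hu, one_pow]
  have hh : ‖u - (2⁻¹ : ℝ) • m‖ ^ 2 = 1 - ⟪u, m⟫ + ‖m‖ ^ 2 / 4 := by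
    rw [norm_sub_sq_real, hu, real_inner_smul_right, norm_smul, Real.norm_of_nonneg (by norm_num)]
    ring
  have hs_le : ‖u - m‖ ≤ 1 + ‖m‖ := by simpa [hu] using norm_sub_le u m
  have hh_le : ‖u - (2⁻¹ : ℝ) • m‖ ≤ 1 + ‖m‖ / 2 := by
    simpa [hu, norm_smul, div_eq_inv_mul] using norm_sub_le u ((2⁻¹ : ℝ) • m)
  have hge := one_sub_inner_le_norm_sub hu m
  have hmid : ‖u - (2⁻¹ : ℝ) • m‖ ≤ (1 + ‖u - m‖) / 2 :=
    abs_le_of_sq_le_sq' (by nlinarith) (by positivity) |>.2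
  nlinarith [mul_le_mul_of_nonneg_left (show (1 + ‖u - m‖) / 2 + ‖u - (2⁻¹ : ℝ) • m‖ ≤ 2 + ‖m‖ by
    linarith) (sub_nonneg.mpr hmid)]

end UnitVector

section WeightedPoints

variable {E : Type*} [NormedAddCommGroup E] [InnerProductSpace ℝ E] {ι : Type*} [Fintype ι]
  {x : ι → E} {ω : ι → ℝ}

variable (x ω) in
def avgDist (y : E) : ℝ := ∑ i, ω i * ‖x i - y‖

lemma sum_mul_inner_sq_le_mul_norm_sq {a : ℝ}
    (h : ∀ v : E, ‖v‖ = 1 → ∑ i, ω i * ⟪x i, v⟫ ^ 2 ≤ a) (v : E) :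
    ∑ i, ω i * ⟪x i, v⟫ ^ 2 ≤ a * ‖v‖ ^ 2 := by
  rcases eq_or_ne v 0 with rfl | hv
  · simp
  have hunit := h (‖v‖⁻¹ • v) (norm_smul_inv_norm hv)
  simp only [real_inner_smul_right, mul_pow, mul_left_comm _ (‖v‖⁻¹ ^ 2), ← Finset.mul_sum]
    at hunit
  rwa [inv_pow, inv_mul_le_iff₀ (by positivity), mul_comm] at hunit

lemma sum_mul_norm_sub_sub_one_sub_inner_eq (hsum : ∑ i, ω i = 1) (m : E) :
    ∑ i, ω i * (‖x i - m‖ - (1 - ⟪x i, m⟫)) = avgDist x ω m - 1 + ⟪∑ i, ω i • x i, m⟫ := by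
  simp only [mul_sub, mul_one, Finset.sum_sub_distrib, hsum, sum_inner, real_inner_smul_left,
    avgDist]
  ring

lemma sq_norm_sub_sum_mul_inner_sq_le (hx : ∀ i, ‖x i‖ = 1) (hω : ∀ i, 0 ≤ ω i)
    (hsum : ∑ i, ω i = 1) (m : E) :
    ‖m‖ ^ 2 - ∑ i, ω i * ⟪x i, m⟫ ^ 2 ≤
      2 * (1 + ‖m‖) * (avgDist x ω m - 1 + ⟪∑ i, ω i • x i, m⟫) := by
  have hterm (i : ι) := mul_le_mul_of_nonneg_left (sq_norm_sub_sq_inner_le (hx i) m) (hω i)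
  calc ‖m‖ ^ 2 - ∑ i, ω i * ⟪x i, m⟫ ^ 2 = ∑ i, ω i * (‖m‖ ^ 2 - ⟪x i, m⟫ ^ 2) := by
        simp only [mul_sub, Finset.sum_sub_distrib, ← Finset.sum_mul, hsum, one_mul]
    _ ≤ ∑ i, ω i * (2 * (1 + ‖m‖) * (‖x i - m‖ - (1 - ⟪x i, m⟫))) :=
        Finset.sum_le_sum fun i _ => hterm i
    _ = _ := by
        rw [← sum_mul_norm_sub_sub_one_sub_inner_eq hsum, Finset.mul_sum]
        simp only [mul_left_comm]

lemma avgDist_sub_one_add_inner_le (hx : ∀ i, ‖x i‖ = 1) (hω : ∀ i, 0 ≤ ω i)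
    (hsum : ∑ i, ω i = 1) (m : E) :
    avgDist x ω m - 1 + ⟪∑ i, ω i • x i, m⟫ ≤
      (2 + ‖m‖) * (1 + avgDist x ω m - 2 * avgDist x ω ((2⁻¹ : ℝ) • m)) := by
  have hterm (i : ι) :=
    mul_le_mul_of_nonneg_left (norm_sub_sub_one_sub_inner_le (hx i) m) (hω i)
  calc _ = ∑ i, ω i * (‖x i - m‖ - (1 - ⟪x i, m⟫)) :=
        (sum_mul_norm_sub_sub_one_sub_inner_eq hsum m).symm
    _ ≤ ∑ i, ω i * ((2 + ‖m‖) * (1 + ‖x i - m‖ - 2 * ‖x i - (2⁻¹ : ℝ) • m‖)) :=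
        Finset.sum_le_sum fun i _ => hterm i
    _ = (2 + ‖m‖) * ∑ i, (ω i + ω i * ‖x i - m‖ - 2 * (ω i * ‖x i - (2⁻¹ : ℝ) • m‖)) := by
        rw [Finset.mul_sum]; exact Finset.sum_congr rfl fun i _ => by ring
    _ = _ := by rw [Finset.sum_sub_distrib, Finset.sum_add_distrib, hsum, ← Finset.mul_sum]; rfl

end WeightedPoints

/-- If `‖∑ ω_i x̂_i‖ = ‖∇Ad(0)‖ < 5/1000` and the smallest eigenvalue of the Hessian
`H Ad(0) = I_d - ∑ ω_i x̂_i x̂_iᵀ` exceeds `(d-1)/d - 1/100` (expressed via the Rayleigh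
quotient: every unit vector `v` has `1 - ∑ ω_i ⟨x̂_i, v⟩² > (d-1)/d - 1/100`), with `d ≥ 2`,
then any geometric median `μ` (minimizer of `Ad(y) = ∑ ω_i ‖x̂_i - y‖`) satisfies
`‖μ‖ ≤ 1/50`. -/
theorem stmt14 (d n : ℕ) (hd : 2 ≤ d)
    (x : Fin n → EuclideanSpace ℝ (Fin d)) (hx : ∀ i, ‖x i‖ = 1)
    (ω : Fin n → ℝ) (hω : ∀ i, 0 < ω i) (hsum : ∑ i, ω i = 1)
    (hgrad : ‖∑ i, ω i • x i‖ < 5 / 1000)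
    (hhess : ∀ v : EuclideanSpace ℝ (Fin d), ‖v‖ = 1 →
      ((d : ℝ) - 1) / d - 1 / 100 < 1 - ∑ i, ω i * (inner ℝ (x i) v : ℝ) ^ 2)
    (μ : EuclideanSpace ℝ (Fin d))
    (hmed : IsMinOn (fun y : EuclideanSpace ℝ (Fin d) => ∑ i, ω i * ‖x i - y‖) Set.univ μ) :
    ‖μ‖ ≤ 1 / 50 := by
  have hω_nonneg (i : Fin n) : 0 ≤ ω i := (hω i).le
  have hgap : ⟪∑ i, ω i • x i, μ⟫ ≤ 5 / 1000 * ‖μ‖ :=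
    (real_inner_le_norm _ _).trans (mul_le_mul_of_nonneg_right hgrad.le (norm_nonneg μ))
  have hquad : ∑ i, ω i * ⟪x i, μ⟫ ^ 2 ≤ 51 / 100 * ‖μ‖ ^ 2 := by
    have hdim : (1 : ℝ) / 2 ≤ ((d : ℝ) - 1) / d := by
      rw [le_div_iff₀ (by positivity)]
      linarith [show (2 : ℝ) ≤ d by exact_mod_cast hd]
    exact sum_mul_inner_sq_le_mul_norm_sq (fun v hv => by linarith [hhess v hv]) μ
  have hA := sq_norm_sub_sum_mul_inner_sq_le hx hω_nonneg hsum μ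
  have hB := avgDist_sub_one_add_inner_le hx hω_nonneg hsum μ
  have hmin : avgDist x ω μ ≤ avgDist x ω ((2⁻¹ : ℝ) • μ) := hmed (Set.mem_univ _)
  set r := ‖μ‖
  set Δ := avgDist x ω μ - 1 + ⟪∑ i, ω i • x i, μ⟫
  have hr : 0 ≤ r := norm_nonneg μ
  have hΔ : (3 + r) * Δ ≤ (2 + r) * (5 / 1000 * r) := by nlinarith
  have hcubic : 49 / 100 * r ^ 2 * (3 + r) ≤ (1 + r) * (2 + r) * r / 100 := by
    nlinarith [mul_le_mul_of_nonneg_right hA (by positivity : (0 : ℝ) ≤ 3 + r)]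
  nlinarith
end
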